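/- arXiv:2005.08651 — 2 statements merged into one kernel-verified Lean document; each statement's English description precedes it below -/
import Mathlib

section
/- Let p ≥ 5 be prime and let T(1) = Σₙ₌₀^{(p-5)/2} tₙ computed in 𝔽₂, where tₙ = 1 iff qₙ₊₁ = qₙ + 1 for the increasing sequence (qₙ) of quadratic residues mod p. Then T(1) = 1 if p ≡ ±1 (mod 8) and T(1) = 0 if p ≡ ±3 (mod 8). -/
/-!
The sum counts the indices with `q (n + 1) = q n + 1`, i.e. the residues `a` such that `a` and
`a + 1` are both nonzero squares mod `p`. Inversion `a ↦ a⁻¹` permutes this set, since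
`a⁻¹ + 1 = a⁻¹ (a + 1)`, so its parity is that of the fixed points `a = ±1`. Of these, `-1` never
qualifies and `1` qualifies iff `2` is a square mod `p`, i.e. iff `p ≡ ±1 (mod 8)`.
-/

open Finset

theorem Finset.natCast_card_eq_card_filter_fixed_zmod_two {α : Type*} [DecidableEq α]
    {s : Finset α} {g : α → α} (hg_mem : ∀ a ∈ s, g a ∈ s) (hg_inv : ∀ a ∈ s, g (g a) = a) :
    (#s : ZMod 2) = #{a ∈ s | g a = a} := by
  have hmoved : (#{a ∈ s | ¬g a = a} : ZMod 2) = 0 := by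
    rw [← sum_boole]
    refine sum_involution (fun a _ => g a) (fun a ha => ?_) (fun a _ h hfix => h (by simp [hfix]))
      hg_mem hg_inv
    by_cases hfix : g a = a
    · simp [hfix]
    · have : ¬g (g a) = g a := fun h => hfix (by rw [hg_inv a ha] at h; exact h.symm)
      simp only [hfix, this]
      decide
  rw [← card_filter_add_card_filter_not (fun a => g a = a), Nat.cast_add, hmoved, add_zero]

section ConsecutiveSquares

variable {R : Type*} [Ring R] [Fintype R] [DecidableEq R]

variable (R) in
def consecutiveSquares : Finset R :=
  {a | IsSquare a ∧ IsSquare (a + 1) ∧ a ≠ 0 ∧ a + 1 ≠ 0}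

theorem mem_consecutiveSquares {a : R} :
    a ∈ consecutiveSquares R ↔ IsSquare a ∧ IsSquare (a + 1) ∧ a ≠ 0 ∧ a + 1 ≠ 0 := by
  simp [consecutiveSquares]

theorem neg_one_notMem_consecutiveSquares : (-1 : R) ∉ consecutiveSquares R := by
  simp [mem_consecutiveSquares]

theorem one_mem_consecutiveSquares_iff :
    (1 : R) ∈ consecutiveSquares R ↔ IsSquare (2 : R) ∧ (2 : R) ≠ 0 := by
  rw [mem_consecutiveSquares, one_add_one_eq_two]
  refine ⟨fun h => ⟨h.2.1, h.2.2.2⟩, fun ⟨hsq, hne⟩ => ⟨IsSquare.one, hsq, fun h1 => ?_, hne⟩⟩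
  rw [← one_add_one_eq_two, h1, add_zero] at hne
  exact hne rfl

end ConsecutiveSquares

section Field

variable {F : Type*} [Field F] [Fintype F] [DecidableEq F]

theorem inv_mem_consecutiveSquares {a : F} (ha : a ∈ consecutiveSquares F) :
    a⁻¹ ∈ consecutiveSquares F := by
  obtain ⟨hsq, hsq_succ, hne, hne_succ⟩ := mem_consecutiveSquares.mp ha
  have hinv_succ : a⁻¹ + 1 = a⁻¹ * (a + 1) := by
    rw [mul_add, inv_mul_cancel₀ hne, mul_one, add_comm]
  refine mem_consecutiveSquares.mpr ⟨hsq.inv, ?_, inv_ne_zero hne, ?_⟩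
  · rw [hinv_succ]
    exact hsq.inv.mul hsq_succ
  · rw [hinv_succ]
    exact mul_ne_zero (inv_ne_zero hne) hne_succ

theorem filter_inv_eq_self_consecutiveSquares :
    {a ∈ consecutiveSquares F | a⁻¹ = a} = {a ∈ consecutiveSquares F | a = 1} := by
  refine filter_congr fun a ha => ⟨fun hfix => ?_, fun h => by rw [h, inv_one]⟩
  have hne : a ≠ 0 := (mem_consecutiveSquares.mp ha).2.2.1
  have hsq : a ^ 2 = 1 := by rw [sq]; nth_rewrite 1 [← hfix]; exact inv_mul_cancel₀ hne
  rcases sq_eq_one_iff.mp hsq with rfl | rfl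
  · rfl
  · exact absurd ha neg_one_notMem_consecutiveSquares

theorem natCast_card_consecutiveSquares_zmod_two :
    (#(consecutiveSquares F) : ZMod 2) = if IsSquare (2 : F) ∧ (2 : F) ≠ 0 then 1 else 0 := by
  rw [natCast_card_eq_card_filter_fixed_zmod_two (fun _ => inv_mem_consecutiveSquares)
    (fun a _ => inv_inv a), filter_inv_eq_self_consecutiveSquares, filter_eq']
  simp only [one_mem_consecutiveSquares_iff]
  split_ifs <;> simp

end Field

theorem ZMod.natCast_ne_zero_iff_of_le {n m : ℕ} (hm : m ≤ n) :
    (m : ZMod n) ≠ 0 ↔ 0 < m ∧ m < n := by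
  rcases hm.lt_or_eq with hlt | rfl
  · rw [← ZMod.val_pos, ZMod.val_natCast_of_lt hlt]
    exact ⟨fun h => ⟨h, hlt⟩, And.left⟩
  · simp

theorem ZMod.exists_sq_mod_eq_iff_isSquare {n m : ℕ} [NeZero n] (hm : m < n) :
    (∃ x : ℕ, x ^ 2 % n = m) ↔ IsSquare (m : ZMod n) := by
  constructor
  · rintro ⟨x, rfl⟩
    exact ⟨x, by push_cast [ZMod.natCast_mod]; ring⟩
  · rintro ⟨r, hr⟩
    refine ⟨r.val, ?_⟩
    rw [← ZMod.val_natCast, Nat.cast_pow, ZMod.natCast_zmod_val, sq, ← hr,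
      ZMod.val_natCast_of_lt hm]

def nonzeroSquareResidues (n : ℕ) [NeZero n] : Finset ℕ :=
  {m ∈ Ioo 0 n | IsSquare (m : ZMod n)}

section NonzeroSquareResidues

variable {n : ℕ} [NeZero n]

theorem mem_nonzeroSquareResidues {m : ℕ} :
    m ∈ nonzeroSquareResidues n ↔ 0 < m ∧ m < n ∧ ∃ x : ℕ, x ^ 2 % n = m := by
  rw [nonzeroSquareResidues, mem_filter, mem_Ioo, and_assoc]
  exact ⟨fun ⟨h0, hn, hsq⟩ => ⟨h0, hn, (ZMod.exists_sq_mod_eq_iff_isSquare hn).mpr hsq⟩,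
    fun ⟨h0, hn, hsq⟩ => ⟨h0, hn, (ZMod.exists_sq_mod_eq_iff_isSquare hn).mp hsq⟩⟩

theorem natCast_mem_consecutiveSquares_iff {m : ℕ} (hm : m < n) :
    (m : ZMod n) ∈ consecutiveSquares (ZMod n) ↔
      m ∈ nonzeroSquareResidues n ∧ m + 1 ∈ nonzeroSquareResidues n := by
  have hsucc := ZMod.natCast_ne_zero_iff_of_le (Nat.add_one_le_of_lt hm)
  push_cast at hsucc
  simp only [mem_consecutiveSquares, nonzeroSquareResidues, mem_filter, mem_Ioo,
    ZMod.natCast_ne_zero_iff_of_le hm.le, hsucc, Nat.cast_add, Nat.cast_one, hm, and_true,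
    Nat.add_one_pos, true_and]
  tauto

theorem card_filter_succ_mem_nonzeroSquareResidues :
    #{m ∈ nonzeroSquareResidues n | m + 1 ∈ nonzeroSquareResidues n} =
      #(consecutiveSquares (ZMod n)) := by
  have hlt : ∀ {m}, m ∈ nonzeroSquareResidues n → m < n := fun hm =>
    (mem_nonzeroSquareResidues.mp hm).2.1
  refine card_nbij' Nat.cast ZMod.val (fun m hm => ?_) (fun a ha => ?_)
    (fun m hm => ZMod.val_natCast_of_lt (hlt (mem_filter.mp hm).1))
    (fun a _ => ZMod.natCast_zmod_val a)
  · rw [mem_coe, mem_filter] at hm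
    exact (natCast_mem_consecutiveSquares_iff (hlt hm.1)).mpr hm
  · rw [mem_coe, ← ZMod.natCast_zmod_val a] at ha
    exact mem_filter.mpr ((natCast_mem_consecutiveSquares_iff (ZMod.val_lt a)).mp ha)

end NonzeroSquareResidues

theorem StrictMonoOn.card_filter_succ_eq {A : Finset ℕ} {q : ℕ → ℕ} {k : ℕ}
    (hq : StrictMonoOn q (Set.Iic k)) (hA : ∀ m, m ∈ A ↔ ∃ n ≤ k, q n = m) :
    #{n ∈ range k | q (n + 1) = q n + 1} = #{m ∈ A | m + 1 ∈ A} := by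
  refine card_bij (fun n _ => q n) (fun n hn => ?_) (fun i hi j hj hij => ?_) (fun m hm => ?_)
  · rw [mem_filter, mem_range] at hn
    rw [mem_filter, hA, hA]
    exact ⟨⟨n, hn.1.le, rfl⟩, n + 1, hn.1, hn.2⟩
  · rw [mem_filter, mem_range] at hi hj
    exact hq.injOn (Set.mem_Iic.mpr hi.1.le) (Set.mem_Iic.mpr hj.1.le) hij
  · rw [mem_filter, hA, hA] at hm
    obtain ⟨⟨i, hi, rfl⟩, j, hj, hqj⟩ := hm
    have hij : i < j := (hq.lt_iff_lt hi hj).mp (by omega)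
    have hj_eq : j = i + 1 := by
      by_contra hne
      have hi_succ : i + 1 ∈ Set.Iic k := Set.mem_Iic.mpr (by omega)
      have h₁ := hq hi hi_succ i.lt_add_one
      have h₂ := hq hi_succ hj (show i + 1 < j by omega)
      omega
    subst hj_eq
    exact ⟨i, mem_filter.mpr ⟨mem_range.mpr hj, hqj⟩, rfl⟩

theorem sum_tn_mod_two (p : ℕ) (hp : p.Prime) (hp5 : 5 ≤ p) (q : ℕ → ℕ)
    (hmono : ∀ i j : ℕ, i < j → j ≤ (p - 3) / 2 → q i < q j)
    (hbij : ∀ m : ℕ, (1 ≤ m ∧ m ≤ p - 1 ∧ ∃ x : ℕ, x ^ 2 % p = m) ↔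
      ∃ n ≤ (p - 3) / 2, q n = m)
    (t : ℕ → ZMod 2)
    (ht : ∀ n ≤ (p - 5) / 2, t n = if q (n + 1) = q n + 1 then 1 else 0) :
    (∑ n ∈ Finset.range ((p - 3) / 2), t n) =
      if p % 8 = 1 ∨ p % 8 = 7 then 1 else 0 := by
  have := Fact.mk hp
  have hp2 : p ≠ 2 := by omega
  have hA : ∀ m, m ∈ nonzeroSquareResidues p ↔ ∃ n ≤ (p - 3) / 2, q n = m := fun m => by
    rw [← hbij, mem_nonzeroSquareResidues]
    exact ⟨fun ⟨h0, hlt, hsq⟩ => ⟨h0, by omega, hsq⟩, fun ⟨h1, hle, hsq⟩ => ⟨h1, by omega, hsq⟩⟩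
  have htwo : (2 : ZMod p) ≠ 0 := by
    exact_mod_cast (ZMod.natCast_ne_zero_iff_of_le (by omega : 2 ≤ p)).mpr ⟨two_pos, by omega⟩
  calc (∑ n ∈ range ((p - 3) / 2), t n)
      = #{n ∈ range ((p - 3) / 2) | q (n + 1) = q n + 1} := by
        rw [sum_congr rfl fun n hn => ht n (by rw [mem_range] at hn; omega), sum_boole]
    _ = #(consecutiveSquares (ZMod p)) := by
        rw [StrictMonoOn.card_filter_succ_eq (fun i hi j hj hij => hmono i j hij hj) hA,
          card_filter_succ_mem_nonzeroSquareResidues]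
    _ = if p % 8 = 1 ∨ p % 8 = 7 then 1 else 0 := by
        simp only [natCast_card_consecutiveSquares_zmod_two, ZMod.exists_sq_eq_two_iff hp2, htwo,
          ne_eq, not_false_eq_true, and_true]
end

section
/- Let p ≥ 5 be prime with p ≡ 9 or 13 (mod 16), such that r = (p-3)/2 is an odd prime and 2 is a primitive root modulo r. Then the sequence (tₙ) (tₙ = 1 iff consecutive quadratic residues qₙ, qₙ₊₁ mod p satisfy qₙ₊₁ = qₙ+1, extended with period r) has linear complexity (p-3)/2 if p ≡ 9 (mod 16) and (p-5)/2 if p ≡ 13 (mod 16). -/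
/-- The linear complexity of a binary sequence: the least `L` such that the sequence
satisfies a linear recurrence of order `L` over `𝔽₂`. -/
noncomputable def LinearComplexity (s : ℕ → ZMod 2) : ℕ :=
  sInf {L : ℕ | ∃ c : ℕ → ZMod 2, ∀ n : ℕ,
    s (n + L) = ∑ i ∈ Finset.range L, c i * s (n + i)}

/-!
The shift operator makes sequences over a field into `K[X]`-modules; the polynomials annihilating
`t` form an ideal, and the linear complexity of `t` is the degree of its generator. If `t` has
period `r`, the ideal contains `X ^ r - 1 = (X - 1) Φ` with `Φ = 1 + X + ⋯ + X ^ (r - 1)`, the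
`r`-th cyclotomic polynomial, which is irreducible over `𝔽₂` because `2` is a primitive root
modulo the prime `r`. Hence for non-constant `t` the generator is `Φ` or `X ^ r - 1`, according as
`Φ` kills `t` or not, i.e. as the sum of one period of `t` vanishes or not.

That sum is the parity of the number of `n < r` with `qₙ₊₁ = qₙ + 1`, which is the number of
`x ∈ 𝔽ₚ` such that `x` and `x + 1` are both nonzero squares. Expanding
`∑ (1 + χ x) (1 + χ (x + 1))` for the quadratic character `χ`, whose Jacobi sum gives
`∑ χ x χ (x + 1) = -1`, shows this number is `(p - 5) / 4`: odd if `p ≡ 9` and even if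
`p ≡ 13 (mod 16)`.
-/

open Polynomial Finset

theorem Function.Periodic.sum_range_add {M : Type*} [AddCancelCommMonoid M] {t : ℕ → M} {r : ℕ}
    (h : Function.Periodic t r) (n : ℕ) : ∑ i ∈ range r, t (n + i) = ∑ i ∈ range r, t i := by
  induction n with
  | zero => simp
  | succ n ih =>
    have key := (sum_range_succ' (fun i => t (n + i)) r).symm.trans (sum_range_succ _ r)
    rw [add_zero, h n, add_left_inj] at key
    simpa only [add_right_comm n 1, add_assoc] using key.trans ih

theorem Irreducible.dvd_of_mul_mem {R : Type*} [CommRing R] [IsBezout R] {I : Ideal R}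
    {p q f : R} (hp : Irreducible p) (hpq : p * q ∈ I) (hq : q ∉ I) (hf : f ∈ I) : p ∣ f := by
  by_contra hpf
  obtain ⟨a, b, hab⟩ := hp.coprime_iff_not_dvd.mpr hpf
  have : q = a * (p * q) + b * q * f := by linear_combination (-q) * hab
  exact hq (this ▸ I.add_mem (I.mul_mem_left a hpq) (I.mul_mem_left _ hf))

theorem natDegree_geom_sum_X {R : Type*} [CommRing R] [Nontrivial R] (r : ℕ) :
    (∑ i ∈ range r, (X : R[X]) ^ i).natDegree = r - 1 := by
  rcases r.eq_zero_or_pos with rfl | hr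
  · simp
  have h := congrArg natDegree (geom_sum_mul (X : R[X]) r)
  rw [(monic_geom_sum_X hr.ne').natDegree_mul (by simpa using monic_X_sub_C (1 : R)), ← C_1,
    natDegree_X_sub_C, natDegree_X_pow_sub_C] at h
  omega

theorem ZMod.irreducible_cyclotomic_of_orderOf_eq_totient {ℓ n : ℕ} [Fact ℓ.Prime]
    (hℓn : ¬ℓ ∣ n) (h : orderOf (ℓ : ZMod n) = n.totient) :
    Irreducible (cyclotomic n (ZMod ℓ)) :=
  ZMod.irreducible_of_dvd_cyclotomic_of_natDegree hℓn dvd_rfl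
    (by rw [natDegree_cyclotomic, ← h, ← orderOf_units, ZMod.coe_unitOfCoprime])

namespace LinearRecurrenceSeq

section CommRing

variable {R : Type*} [CommRing R]

variable (R) in
abbrev shift : Module.End R (ℕ → R) := LinearMap.funLeft R R (· + 1)

theorem shift_pow_apply (k : ℕ) (t : ℕ → R) (n : ℕ) : (shift R ^ k) t n = t (n + k) := by
  induction k generalizing n with
  | zero => rfl
  | succ k ih => rw [pow_succ', Module.End.mul_apply, LinearMap.funLeft_apply, ih]; ring_nf

def annIdeal (t : ℕ → R) : Ideal R[X] where
  carrier := {f | aeval (shift R) f t = 0}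
  add_mem' hf hg := by simp_all
  zero_mem' := by simp
  smul_mem' c f hf := by simp_all [Module.End.mul_apply]

theorem mem_annIdeal {t : ℕ → R} {f : R[X]} : f ∈ annIdeal t ↔ aeval (shift R) f t = 0 :=
  Iff.rfl

theorem aeval_shift_sum_apply (t : ℕ → R) (s : Finset ℕ) (a : ℕ → R) (n : ℕ) :
    aeval (shift R) (∑ i ∈ s, C (a i) * X ^ i) t n = ∑ i ∈ s, a i * t (n + i) := by
  simp [Finset.sum_apply, Module.End.mul_apply, shift_pow_apply]

theorem X_pow_add_sum_mem_annIdeal_iff {t : ℕ → R} {L : ℕ} {a : ℕ → R} :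
    X ^ L + ∑ i ∈ range L, C (a i) * X ^ i ∈ annIdeal t ↔
      ∀ n, t (n + L) + ∑ i ∈ range L, a i * t (n + i) = 0 := by
  simp only [mem_annIdeal, funext_iff, map_add, LinearMap.add_apply, Pi.add_apply,
    aeval_shift_sum_apply, map_pow, aeval_X, shift_pow_apply, Pi.zero_apply]

theorem degree_sum_C_mul_X_pow_lt [Nontrivial R] (L : ℕ) (a : ℕ → R) :
    (∑ i ∈ range L, C (a i) * X ^ i).degree < (X ^ L : R[X]).degree := by
  simp_rw [degree_X_pow, ← Fin.sum_univ_eq_sum_range, degree_sum_fin_lt]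

theorem exists_recurrence_iff [Nontrivial R] {t : ℕ → R} {L : ℕ} :
    (∃ c : ℕ → R, ∀ n, t (n + L) = ∑ i ∈ range L, c i * t (n + i)) ↔
      ∃ f ∈ annIdeal t, f.Monic ∧ f.natDegree = L := by
  constructor
  · rintro ⟨c, hc⟩
    have hlt := degree_sum_C_mul_X_pow_lt L (fun i => -c i)
    refine ⟨X ^ L + ∑ i ∈ range L, C (-c i) * X ^ i, ?_, ?_, ?_⟩
    · rw [X_pow_add_sum_mem_annIdeal_iff]
      simp [hc]
    · exact monic_X_pow_add (by rwa [degree_X_pow] at hlt)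
    · rw [natDegree_add_eq_left_of_degree_lt hlt, natDegree_X_pow]
  · rintro ⟨f, hf, hmonic, rfl⟩
    rw [hmonic.as_sum, X_pow_add_sum_mem_annIdeal_iff] at hf
    exact ⟨fun i => -f.coeff i, fun n => by simpa [eq_neg_iff_add_eq_zero] using hf n⟩

theorem X_pow_sub_one_mem_annIdeal {t : ℕ → R} {r : ℕ} (h : Function.Periodic t r) :
    X ^ r - 1 ∈ annIdeal t := by
  ext n
  simp [shift_pow_apply, h n]

theorem X_sub_one_mem_annIdeal_iff {t : ℕ → R} :
    X - 1 ∈ annIdeal t ↔ ∀ n, t (n + 1) = t n := by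
  simp [mem_annIdeal, funext_iff, sub_eq_zero]

theorem X_sub_one_notMem_annIdeal {t : ℕ → R} (h : ∃ m n, t m ≠ t n) : X - 1 ∉ annIdeal t := by
  rw [X_sub_one_mem_annIdeal_iff]
  intro hconst
  obtain ⟨m, n, hmn⟩ := h
  have hper : Function.Periodic t (1 : ℕ) := by simpa using hconst
  exact hmn (by simpa using (hper.nat_mul_eq m).trans (hper.nat_mul_eq n).symm)

theorem geom_sum_mem_annIdeal_iff {t : ℕ → R} {r : ℕ} (h : Function.Periodic t r) :
    ∑ i ∈ range r, (X : R[X]) ^ i ∈ annIdeal t ↔ ∑ i ∈ range r, t i = 0 := by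
  simp [mem_annIdeal, funext_iff, Finset.sum_apply, shift_pow_apply, h.sum_range_add]

end CommRing

section Field

variable {K : Type*} [Field K] {t : ℕ → K} {r : ℕ}

theorem geom_sum_dvd_of_mem_annIdeal (hΦ : Irreducible (∑ i ∈ range r, (X : K[X]) ^ i))
    (hper : Function.Periodic t r) (hnc : ∃ m n, t m ≠ t n) {f : K[X]} (hf : f ∈ annIdeal t) :
    (∑ i ∈ range r, X ^ i) ∣ f :=
  hΦ.dvd_of_mul_mem (by rw [geom_sum_mul]; exact X_pow_sub_one_mem_annIdeal hper)
    (X_sub_one_notMem_annIdeal hnc) hf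

theorem annIdeal_eq_span_geom_sum (hΦ : Irreducible (∑ i ∈ range r, (X : K[X]) ^ i))
    (hper : Function.Periodic t r) (hnc : ∃ m n, t m ≠ t n) (hsum : ∑ i ∈ range r, t i = 0) :
    annIdeal t = Ideal.span {∑ i ∈ range r, X ^ i} :=
  le_antisymm
    (fun _ hf => Ideal.mem_span_singleton.mpr (geom_sum_dvd_of_mem_annIdeal hΦ hper hnc hf))
    ((Ideal.span_singleton_le_iff_mem _).mpr ((geom_sum_mem_annIdeal_iff hper).mpr hsum))

theorem annIdeal_eq_span_X_pow_sub_one (hΦ : Irreducible (∑ i ∈ range r, (X : K[X]) ^ i))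
    (hr : (r : K) ≠ 0) (hper : Function.Periodic t r) (hnc : ∃ m n, t m ≠ t n)
    (hsum : ∑ i ∈ range r, t i ≠ 0) :
    annIdeal t = Ideal.span {X ^ r - 1} := by
  have hX : Irreducible (X - 1 : K[X]) := by simpa using irreducible_X_sub_C (1 : K)
  have hcop : IsCoprime (X - 1) (∑ i ∈ range r, (X : K[X]) ^ i) := by
    rw [hX.coprime_iff_not_dvd, ← C_1, dvd_iff_isRoot]
    simpa [IsRoot, eval_finsetSum] using hr
  refine le_antisymm (fun f hf => Ideal.mem_span_singleton.mpr ?_)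
    ((Ideal.span_singleton_le_iff_mem _).mpr (X_pow_sub_one_mem_annIdeal hper))
  rw [← geom_sum_mul, mul_comm]
  refine hcop.mul_dvd ?_ (geom_sum_dvd_of_mem_annIdeal hΦ hper hnc hf)
  exact hX.dvd_of_mul_mem (by rw [mul_comm, geom_sum_mul]; exact X_pow_sub_one_mem_annIdeal hper)
    (mt (geom_sum_mem_annIdeal_iff hper).mp hsum) hf

end Field

end LinearRecurrenceSeq

section LinearComplexity

open LinearRecurrenceSeq

variable {t : ℕ → ZMod 2} {r : ℕ}

theorem linearComplexity_eq_natDegree {f : (ZMod 2)[X]} (h : annIdeal t = Ideal.span {f})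
    (hf : f ≠ 0) : LinearComplexity t = f.natDegree := by
  have hmem : ∀ {g}, g ∈ annIdeal t ↔ f ∣ g := by rw [h]; exact Ideal.mem_span_singleton
  have hrec : f.natDegree ∈
      {L | ∃ c : ℕ → ZMod 2, ∀ n, t (n + L) = ∑ i ∈ range L, c i * t (n + i)} :=
    exists_recurrence_iff.mpr ⟨f * C f.leadingCoeff⁻¹, hmem.mpr (dvd_mul_right _ _),
      monic_mul_leadingCoeff_inv hf, natDegree_mul_leadingCoeff_self_inv f⟩
  refine le_antisymm (Nat.sInf_le hrec) (le_csInf ⟨_, hrec⟩ fun L hL => ?_)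
  obtain ⟨g, hg, hmonic, rfl⟩ := exists_recurrence_iff.mp hL
  exact natDegree_le_of_dvd (hmem.mp hg) hmonic.ne_zero

theorem linearComplexity_of_sum_eq_zero
    (hΦ : Irreducible (∑ i ∈ range r, (X : (ZMod 2)[X]) ^ i)) (hper : Function.Periodic t r)
    (hnc : ∃ m n, t m ≠ t n) (hsum : ∑ i ∈ range r, t i = 0) : LinearComplexity t = r - 1 := by
  rw [linearComplexity_eq_natDegree (annIdeal_eq_span_geom_sum hΦ hper hnc hsum) hΦ.ne_zero,
    natDegree_geom_sum_X]

theorem linearComplexity_of_sum_ne_zero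
    (hΦ : Irreducible (∑ i ∈ range r, (X : (ZMod 2)[X]) ^ i)) (hr : (r : ZMod 2) ≠ 0)
    (hper : Function.Periodic t r) (hnc : ∃ m n, t m ≠ t n) (hsum : ∑ i ∈ range r, t i ≠ 0) :
    LinearComplexity t = r := by
  have hr0 : r ≠ 0 := by rintro rfl; exact hr Nat.cast_zero
  rw [linearComplexity_eq_natDegree (annIdeal_eq_span_X_pow_sub_one hΦ hr hper hnc hsum)
    (X_pow_sub_C_ne_zero (Nat.pos_of_ne_zero hr0) 1)]
  simpa using natDegree_X_pow_sub_C (n := r) (r := (1 : ZMod 2))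

end LinearComplexity

theorem exists_apply_ne_of_card_filter {M : Type*} [Zero M] [One M] [NeZero (1 : M)]
    {t : ℕ → M} {P : ℕ → Prop} [DecidablePred P] {r : ℕ}
    (ht : ∀ n < r, t n = if P n then 1 else 0) (hpos : 0 < #{n ∈ range r | P n})
    (hlt : #{n ∈ range r | P n} < r) : ∃ m n, t m ≠ t n := by
  obtain ⟨a, ha⟩ := card_pos.mp hpos
  obtain ⟨b, hb, hPb⟩ : ∃ b ∈ range r, ¬P b := by
    by_contra! h
    exact hlt.ne (by rw [card_filter_eq_iff.mpr h, card_range])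
  rw [mem_filter, mem_range] at ha
  rw [mem_range] at hb
  exact ⟨a, b, by simp [ht a ha.1, ht b hb, ha.2, hPb]⟩

section QuadraticChar

variable {F : Type*} [Field F] [Fintype F] [DecidableEq F]

theorem sum_quadraticChar_mul_quadraticChar_add_one (hF : ringChar F ≠ 2) :
    ∑ x : F, quadraticChar F x * quadraticChar F (x + 1) = -1 := by
  have hJ := jacobiSum_nontrivial_inv (quadraticChar_ne_one hF)
  rw [(quadraticChar_isQuadratic F).inv, jacobiSum] at hJ
  calc ∑ x : F, quadraticChar F x * quadraticChar F (x + 1)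
      = ∑ x : F, quadraticChar F (-x) * quadraticChar F (-x + 1) :=
        (Fintype.sum_equiv (Equiv.neg F) _ _ fun _ => rfl).symm
    _ = quadraticChar F (-1) * ∑ x : F, quadraticChar F x * quadraticChar F (1 - x) := by
        rw [mul_sum]
        refine sum_congr rfl fun x _ => ?_
        rw [neg_eq_neg_one_mul x, map_mul, neg_one_mul, neg_add_eq_sub, mul_assoc]
    _ = -1 := by
        rw [hJ, mul_neg, ← sq, quadraticChar_sq_one (neg_ne_zero.mpr one_ne_zero)]

theorem card_quadraticChar_eq_one_and_add_one (hF : ringChar F ≠ 2) :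
    (4 * #{x : F | quadraticChar F x = 1 ∧ quadraticChar F (x + 1) = 1} : ℤ) =
      Fintype.card F - 4 - quadraticChar F (-1) := by
  have hpt : ∀ x : F, (1 + quadraticChar F x) * (1 + quadraticChar F (x + 1)) =
      (if quadraticChar F x = 1 ∧ quadraticChar F (x + 1) = 1 then 4 else 0) +
        (if x = 0 then 2 else 0) + (if x = -1 then 1 + quadraticChar F (-1) else 0) := by
    intro x
    by_cases hx0 : x = 0
    · simp [hx0, (neg_ne_zero.mpr one_ne_zero).symm]
    by_cases hx1 : x = -1
    · simp [hx1, neg_ne_zero.mpr one_ne_zero]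
    have hx1' : x + 1 ≠ 0 := fun h => hx1 (eq_neg_of_add_eq_zero_left h)
    rcases quadraticChar_dichotomy hx0 with h | h <;>
      rcases quadraticChar_dichotomy hx1' with h' | h' <;> simp [h, h', hx0, hx1]
  have hsum := Finset.sum_congr rfl fun x (_ : x ∈ univ) => hpt x
  have hshift : ∑ x : F, quadraticChar F (x + 1) = ∑ x : F, quadraticChar F x :=
    Fintype.sum_equiv (Equiv.addRight 1) _ _ fun _ => rfl
  simp only [add_mul, mul_add, one_mul, mul_one, sum_add_distrib, hshift,
    quadraticChar_sum_zero hF, sum_quadraticChar_mul_quadraticChar_add_one hF] at hsum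
  simp only [sum_add_distrib, ← sum_filter, sum_const, nsmul_eq_mul, card_univ, filter_eq',
    mem_univ, if_true, card_singleton, Nat.cast_one] at hsum
  linarith

end QuadraticChar

theorem ZMod.isSquare_natCast_iff {n m : ℕ} (hm : m < n) :
    IsSquare (m : ZMod n) ↔ ∃ x : ℕ, x ^ 2 % n = m := by
  have : NeZero n := ⟨by omega⟩
  constructor
  · rintro ⟨y, hy⟩
    refine ⟨y.val, ?_⟩
    rw [← Nat.mod_eq_of_lt hm, ← ZMod.natCast_eq_natCast_iff', Nat.cast_pow,
      ZMod.natCast_zmod_val, hy, sq]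
  · rintro ⟨x, rfl⟩
    exact ⟨x, by rw [ZMod.natCast_mod]; push_cast; ring⟩

def IsQuadResidue (p m : ℕ) : Prop := 1 ≤ m ∧ m ≤ p - 1 ∧ ∃ x : ℕ, x ^ 2 % p = m

theorem isQuadResidue_iff {p m : ℕ} [Fact p.Prime] (hm : m ≤ p) :
    IsQuadResidue p m ↔ quadraticChar (ZMod p) m = 1 := by
  have hp := (Fact.out : p.Prime).two_le
  by_cases h0 : (m : ZMod p) = 0
  · have hm' : m = 0 ∨ m = p := by
      rcases Nat.eq_zero_or_pos m with h | h
      · exact .inl h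
      · exact .inr (le_antisymm hm (Nat.le_of_dvd h ((ZMod.natCast_eq_zero_iff m p).mp h0)))
    simp only [IsQuadResidue, h0, quadraticChar_zero, zero_ne_one, iff_false]
    omega
  · have hm0 : m ≠ 0 := by rintro rfl; exact h0 Nat.cast_zero
    have hmp : m ≠ p := fun h => h0 (h ▸ ZMod.natCast_self p)
    rw [quadraticChar_one_iff_isSquare h0, ZMod.isSquare_natCast_iff (by omega)]
    exact ⟨fun h => h.2.2, fun h => ⟨by omega, by omega, h⟩⟩

theorem card_isQuadResidue_and_succ (p : ℕ) [Fact p.Prime] [DecidablePred (IsQuadResidue p)] :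
    #{a ∈ range p | IsQuadResidue p a ∧ IsQuadResidue p (a + 1)} =
      #{x : ZMod p | quadraticChar (ZMod p) x = 1 ∧ quadraticChar (ZMod p) (x + 1) = 1} := by
  have hiff : ∀ a < p, IsQuadResidue p a ∧ IsQuadResidue p (a + 1) ↔
      quadraticChar (ZMod p) a = 1 ∧ quadraticChar (ZMod p) (a + 1) = 1 := fun a ha => by
    rw [isQuadResidue_iff ha.le, isQuadResidue_iff ha, Nat.cast_succ]
  refine card_nbij' (fun a => (a : ZMod p)) ZMod.val (fun a ha => ?_) (fun x hx => ?_)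
    (fun a ha => ZMod.val_cast_of_lt (mem_range.mp (mem_filter.mp ha).1))
    (fun x _ => ZMod.natCast_zmod_val x)
  · simp only [coe_filter, mem_range, Set.mem_ofPred_eq, mem_univ, true_and] at ha ⊢
    exact (hiff a ha.1).mp ha.2
  · simp only [coe_filter, mem_range, Set.mem_ofPred_eq, mem_univ, true_and] at hx ⊢
    refine ⟨x.val_lt, (hiff _ x.val_lt).mpr ?_⟩
    simpa using hx

theorem card_isQuadResidue_and_succ_of_mod_four_eq_one {p : ℕ} [Fact p.Prime]
    [DecidablePred (IsQuadResidue p)] (hp : p % 4 = 1) :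
    4 * #{a ∈ range p | IsQuadResidue p a ∧ IsQuadResidue p (a + 1)} + 5 = p := by
  have hF : ringChar (ZMod p) ≠ 2 := by rw [ZMod.ringChar_zmod_n]; omega
  have h := card_quadraticChar_eq_one_and_add_one hF
  rw [quadraticChar_neg_one hF, ZMod.card, ZMod.χ₄_nat_one_mod_four hp,
    ← card_isQuadResidue_and_succ] at h
  omega

theorem StrictMonoOn.card_filter_succ_eq_add_one {q : ℕ → ℕ} {r : ℕ}
    (hq : StrictMonoOn q (Set.Iic r)) {A : ℕ → Prop} [DecidablePred A]
    (hA : ∀ m, A m ↔ ∃ n ≤ r, q n = m) {s : Finset ℕ} (hs : ∀ m, A m → m ∈ s) :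
    #{n ∈ range r | q (n + 1) = q n + 1} = #{a ∈ s | A a ∧ A (a + 1)} := by
  refine card_bij (fun n _ => q n) (fun n hn => ?_) (fun a ha b hb hab => ?_) (fun a ha => ?_)
  · simp only [mem_filter, mem_range] at hn ⊢
    have hqn : A (q n) := (hA _).mpr ⟨n, by omega, rfl⟩
    have hqn1 : A (q n + 1) := (hA _).mpr ⟨n + 1, by omega, hn.2⟩
    exact ⟨hs _ hqn, hqn, hqn1⟩
  · simp only [mem_filter, mem_range] at ha hb
    exact hq.injOn (Set.mem_Iic.mpr (by omega)) (Set.mem_Iic.mpr (by omega)) hab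
  · simp only [mem_filter] at ha
    obtain ⟨n, hn, rfl⟩ := (hA _).mp ha.2.1
    obtain ⟨m, hm, hqm⟩ := (hA _).mp ha.2.2
    have hnm : n < m := (hq.lt_iff_lt hn hm).mp (by omega)
    have hlt : q n < q (n + 1) := hq (Set.mem_Iic.mpr hn) (Set.mem_Iic.mpr (by omega)) (by omega)
    have hle : q (n + 1) ≤ q m := (hq.le_iff_le (Set.mem_Iic.mpr (by omega)) hm).mpr hnm
    exact ⟨n, by simp only [mem_filter, mem_range]; omega, rfl⟩

theorem linearComplexity_tn (p : ℕ) (hp : p.Prime) (hp16 : p % 16 = 9 ∨ p % 16 = 13)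
    (hr : Nat.Prime ((p - 3) / 2)) (hrodd : Odd ((p - 3) / 2))
    (hprim : orderOf (2 : ZMod ((p - 3) / 2)) = (p - 3) / 2 - 1)
    (q : ℕ → ℕ)
    (hmono : ∀ i j : ℕ, i < j → j ≤ (p - 3) / 2 → q i < q j)
    (hbij : ∀ m : ℕ, (1 ≤ m ∧ m ≤ p - 1 ∧ ∃ x : ℕ, x ^ 2 % p = m) ↔
      ∃ n ≤ (p - 3) / 2, q n = m)
    (t : ℕ → ZMod 2)
    (ht : ∀ n ≤ (p - 5) / 2, t n = if q (n + 1) = q n + 1 then 1 else 0)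
    (hper : ∀ n, t (n + (p - 3) / 2) = t n) :
    LinearComplexity t = if p % 16 = 9 then (p - 3) / 2 else (p - 5) / 2 := by
  classical
  have := Fact.mk hp
  have := Fact.mk hr
  set r := (p - 3) / 2
  have ht' : ∀ n < r, t n = if q (n + 1) = q n + 1 then 1 else 0 := fun n hn => ht n (by omega)
  have hΦ : Irreducible (∑ i ∈ range r, (X : (ZMod 2)[X]) ^ i) := by
    rw [← cyclotomic_prime]
    refine ZMod.irreducible_cyclotomic_of_orderOf_eq_totient
      (Nat.two_dvd_ne_zero.mpr (Nat.odd_iff.mp hrodd)) ?_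
    rwa [Nat.totient_prime hr, Nat.cast_ofNat]
  have hcard : 4 * #{n ∈ range r | q (n + 1) = q n + 1} + 5 = p := by
    rw [StrictMonoOn.card_filter_succ_eq_add_one (A := IsQuadResidue p) (s := range p)
      (fun i _ j hj hij => hmono i j hij hj) hbij
      fun m hm => mem_range.mpr (by have := hm.2.1; omega)]
    exact card_isQuadResidue_and_succ_of_mod_four_eq_one (by omega)
  have hsum : ∑ n ∈ range r, t n = (#{n ∈ range r | q (n + 1) = q n + 1} : ZMod 2) := by
    rw [← sum_boole]
    exact sum_congr rfl fun n hn => ht' n (mem_range.mp hn)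
  have hnc := exists_apply_ne_of_card_filter ht' (by omega) (by omega)
  rcases hp16 with h9 | h13
  · rw [if_pos h9]
    refine linearComplexity_of_sum_ne_zero hΦ (ZMod.natCast_ne_zero_iff_odd.mpr hrodd) hper hnc ?_
    rw [hsum, ZMod.natCast_ne_zero_iff_odd, Nat.odd_iff]
    omega
  · rw [if_neg (by omega), show (p - 5) / 2 = r - 1 by omega]
    refine linearComplexity_of_sum_eq_zero hΦ hper hnc ?_
    rw [hsum, ZMod.natCast_eq_zero_iff_even, Nat.even_iff]
    omega
end
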